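/- arXiv:1703.05784 — 4 statements merged into one kernel-verified Lean document; each statement's English description precedes it below -/
import Mathlib

section
/- The dual block composition is associative: for ζ : {-1,1}^{m_ζ} → ℝ, φ : {-1,1}^{m_φ} → ℝ, and ψ : {-1,1}^{m_ψ} → ℝ, we have (ζ ⋆ φ) ⋆ ψ = ζ ⋆ (φ ⋆ ψ). -/
/-- The sign of `ψ(x)` (`1` if `ψ(x) > 0`, `-1` otherwise), encoded as a Boolean
(`false ↦ 1`, `true ↦ -1`, with `-1` representing logical TRUE). -/
noncomputable def signBit {D : Type*} (ψ : D → ℝ) (x : D) : Bool :=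
  if 0 < ψ x then false else true

/-- The dual block composition `(Ψ ⋆ ψ)(x₁,…,x_M) =
`2^M · Ψ(sign(ψ(x₁)),…,sign(ψ(x_M))) · ∏ᵢ |ψ(xᵢ)|`, with the cube `{-1,1}`
encoded by `Bool`. -/
noncomputable def dualBlock {ι D : Type*} [Fintype ι]
    (Ψ : (ι → Bool) → ℝ) (ψ : D → ℝ) : (ι → D) → ℝ :=
  fun x => 2 ^ Fintype.card ι * Ψ (fun i => signBit ψ (x i)) * ∏ i, |ψ (x i)|

/-- Associativity of the dual block composition: `(ζ ⋆ φ) ⋆ ψ = ζ ⋆ (φ ⋆ ψ)`.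
On the left-hand side, `ζ ⋆ φ` is viewed as a function on the cube indexed by
`ι × κ` via currying. -/
theorem dualBlock_assoc {ι κ γ : Type*} [Fintype ι] [Fintype κ] [Fintype γ]
    (ζ : (ι → Bool) → ℝ) (φ : (κ → Bool) → ℝ) (ψ : (γ → Bool) → ℝ) :
    ∀ x : ι → κ → (γ → Bool),
      dualBlock (fun y : ι × κ → Bool => dualBlock ζ φ (fun i j => y (i, j))) ψ
          (fun p : ι × κ => x p.1 p.2)
        = dualBlock ζ (dualBlock φ ψ) x := by
  intro x
  by_cases h : ∀ i j, ψ (x i j) ≠ 0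
  · have hP : ∀ i, 0 < ∏ j, |ψ (x i j)| := fun i =>
      Finset.prod_pos (fun j _ => abs_pos.2 (h i j))
    have h2 : (0:ℝ) < 2 ^ Fintype.card κ := by positivity
    have key : ∀ (i : ι) (a : ℝ),
        (0 < 2 ^ Fintype.card κ * a * ∏ j, |ψ (x i j)|) ↔ 0 < a := by
      intro i a
      rw [show (2:ℝ) ^ Fintype.card κ * a * ∏ j, |ψ (x i j)|
          = (2 ^ Fintype.card κ * ∏ j, |ψ (x i j)|) * a by ring]
      constructor
      · intro hpos
        by_contra hn
        push_neg at hn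
        nlinarith [mul_pos h2 (hP i)]
      · intro ha
        exact mul_pos (mul_pos h2 (hP i)) ha
    have hsign : ∀ i, signBit (dualBlock φ ψ) (x i)
        = signBit φ (fun j => signBit ψ (x i j)) := by
      intro i
      simp only [signBit, dualBlock]
      congr 1
      rw [eq_iff_iff]
      exact key i _
    have habs : ∀ i,
        |(2 ^ Fintype.card κ * φ fun j => signBit ψ (x i j)) * (∏ j, |ψ (x i j)|)|
          = 2 ^ Fintype.card κ * |φ fun j => signBit ψ (x i j)| * ∏ j, |ψ (x i j)| := by
      intro i
      rw [abs_mul, abs_mul, abs_of_pos h2, abs_of_pos (hP i)]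
    simp only [dualBlock, hsign]
    rw [Finset.prod_congr rfl (fun i _ => habs i), Finset.prod_mul_distrib,
      Finset.prod_mul_distrib, Finset.prod_const, Fintype.card_prod,
      Fintype.prod_prod_type]
    rw [Finset.card_univ, Nat.mul_comm (Fintype.card ι)]
    ring
  · push_neg at h
    obtain ⟨i, j, hij⟩ := h
    have hz : (∏ j', |ψ (x i j')|) = 0 :=
      Finset.prod_eq_zero (Finset.mem_univ j) (by simp [hij])
    have h1 : (∏ p : ι × κ, |ψ (x p.1 p.2)|) = 0 :=
      Finset.prod_eq_zero (Finset.mem_univ (i, j)) (by simp [hij])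
    have h2 : (∏ i', |(2 ^ Fintype.card κ * φ fun j' => signBit ψ (x i' j'))
        * (∏ j', |ψ (x i' j')|)|) = 0 :=
      Finset.prod_eq_zero (Finset.mem_univ i) (by simp [hz])
    simp only [dualBlock]
    rw [h1, h2]
    ring
end

section
/- Let Ψ : {-1,1}^M → ℝ satisfy ⟨Ψ, P⟩ = 0 for every polynomial P of degree less than D, and let ψ : {-1,1}^m → ℝ satisfy ⟨ψ, p⟩ = 0 for every polynomial p of degree less than d. Then for every polynomial q on {-1,1}^{mM} of degree less than D·d, ⟨Ψ ⋆ ψ, q⟩ = 0. -/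
/-- The map sending a Boolean to the corresponding element of `{-1,1} ⊆ ℝ`
(`true ↦ -1`, `false ↦ 1`, with `-1` representing logical TRUE). -/
def pm (b : Bool) : ℝ := if b then -1 else 1

lemma pm_eq_signBit_mul_abs {D : Type*} (ψ : D → ℝ) (x : D) :
    ψ x = pm (signBit ψ x) * |ψ x| := by
  unfold signBit pm
  rcases lt_or_ge 0 (ψ x) with h | h
  · simp [h, abs_of_pos h]
  · simp [not_lt.2 h, abs_of_nonpos h]

/-- If `f` has pure high degree `≥ dd`, then `f` is orthogonal to every character
of degree `< dd` (written with exponents). -/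
lemma char_sum_zero {n dd : ℕ} (f : (Fin n → Bool) → ℝ)
    (hf : ∀ p : MvPolynomial (Fin n) ℝ, p.totalDegree < dd →
      ∑ x : Fin n → Bool, f x * MvPolynomial.eval (fun i => pm (x i)) p = 0)
    (e : Fin n → ℕ) (he : ∑ j, e j < dd) :
    ∑ x : Fin n → Bool, f x * ∏ j, pm (x j) ^ e j = 0 := by
  have := hf (MvPolynomial.monomial (Finsupp.equivFunOnFinite.symm e) 1) ?_
  · convert this using 2 with x
    rw [MvPolynomial.eval_monomial, one_mul]
    rw [Finsupp.prod_fintype]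
    · rfl
    · intro j; simp
  · rw [MvPolynomial.totalDegree_monomial _ (one_ne_zero)]
    rw [Finsupp.sum_fintype]
    · exact he
    · intro j; rfl

/-- Multiplicativity of pure high degree under dual block composition:
if `Ψ` has pure high degree `D` and `ψ` has pure high degree `d`, then
`Ψ ⋆ ψ` has pure high degree `D·d`. -/
theorem dualBlock_pure_high_degree (M m D d : ℕ)
    (Ψ : (Fin M → Bool) → ℝ) (ψ : (Fin m → Bool) → ℝ)
    (hΨ : ∀ P : MvPolynomial (Fin M) ℝ, P.totalDegree < D →
      ∑ z : Fin M → Bool, Ψ z * MvPolynomial.eval (fun i => pm (z i)) P = 0)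
    (hψ : ∀ p : MvPolynomial (Fin m) ℝ, p.totalDegree < d →
      ∑ x : Fin m → Bool, ψ x * MvPolynomial.eval (fun i => pm (x i)) p = 0) :
    ∀ q : MvPolynomial (Fin M × Fin m) ℝ, q.totalDegree < D * d →
      ∑ x : Fin M → (Fin m → Bool),
        dualBlock Ψ ψ x * MvPolynomial.eval (fun ij => pm (x ij.1 ij.2)) q = 0 := by
  intro q hq
  classical
  -- key monomial case
  have key : ∀ s : Fin M × Fin m →₀ ℕ, (∑ ij : Fin M × Fin m, s ij) < D * d →
      ∑ x : Fin M → (Fin m → Bool),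
        dualBlock Ψ ψ x * ∏ ij : Fin M × Fin m, pm (x ij.1 ij.2) ^ s ij = 0 := by
    intro s hs
    set degi : Fin M → ℕ := fun i => ∑ j, s (i, j) with hdegi
    have hdegsum : ∑ i, degi i = ∑ ij : Fin M × Fin m, s ij := by
      rw [Fintype.sum_prod_type]
    set g : Fin M → (Fin m → Bool) → ℝ := fun i y => ∏ j, pm (y j) ^ s (i, j) with hg
    set μ : Fin M → Bool → ℝ := fun i z =>
      ∑ y ∈ Finset.univ.filter (fun y => signBit ψ y = z), |ψ y| * g i y with hμ
    -- if the block degree is small, μ i is balanced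
    have hβ : ∀ i : Fin M, degi i < d → μ i false = μ i true := by
      intro i hi
      have h0 : ∑ y : Fin m → Bool, ψ y * g i y = 0 :=
        char_sum_zero ψ hψ (fun j => s (i, j)) hi
      have hsplit : ∑ y : Fin m → Bool, ψ y * g i y = μ i false - μ i true := by
        rw [← Finset.sum_fiberwise Finset.univ (fun y => signBit ψ y)
          (fun y => ψ y * g i y)]
        rw [Fintype.sum_bool]
        have h1 : ∀ z : Bool, ∑ y ∈ Finset.univ.filter (fun y => signBit ψ y = z),
            ψ y * g i y = pm z * μ i z := by
          intro z
          rw [hμ, Finset.mul_sum]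
          apply Finset.sum_congr rfl
          intro y hy
          have hz : signBit ψ y = z := (Finset.mem_filter.1 hy).2
          conv_lhs => rw [pm_eq_signBit_mul_abs ψ y]
          rw [hz]; ring
        rw [h1 true, h1 false]
        simp [pm]; ring
      rw [h0] at hsplit
      linarith
    -- core identity: factor the sum through the sign pattern
    have core : ∑ x : Fin M → (Fin m → Bool),
        dualBlock Ψ ψ x * ∏ ij : Fin M × Fin m, pm (x ij.1 ij.2) ^ s ij
        = 2 ^ M * ∑ z : Fin M → Bool, Ψ z * ∏ i, μ i (z i) := by
      have step1 : ∀ x : Fin M → (Fin m → Bool),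
          dualBlock Ψ ψ x * ∏ ij : Fin M × Fin m, pm (x ij.1 ij.2) ^ s ij
          = 2 ^ M * (Ψ (fun i => signBit ψ (x i)) * ∏ i, (|ψ (x i)| * g i (x i))) := by
        intro x
        rw [dualBlock, Fintype.prod_prod_type, Finset.prod_mul_distrib]
        simp [Fintype.card_fin]
        ring
      simp_rw [step1, ← Finset.mul_sum]
      congr 1
      have fib := (Finset.sum_fiberwise Finset.univ
        (fun x : Fin M → (Fin m → Bool) => fun i => signBit ψ (x i))
        (fun x => Ψ (fun i => signBit ψ (x i)) * ∏ i, (|ψ (x i)| * g i (x i)))).symm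
      rw [fib]
      apply Finset.sum_congr rfl
      intro z _
      have hfib : Finset.univ.filter (fun x : Fin M → (Fin m → Bool) =>
          (fun i => signBit ψ (x i)) = z)
          = Fintype.piFinset (fun i => Finset.univ.filter (fun y => signBit ψ y = z i)) := by
        ext x
        simp [funext_iff]
      rw [hfib]
      have : ∀ x ∈ Fintype.piFinset (fun i =>
          Finset.univ.filter (fun y => signBit ψ y = z i)),
          Ψ (fun i => signBit ψ (x i)) * ∏ i, (|ψ (x i)| * g i (x i))
          = Ψ z * ∏ i, (|ψ (x i)| * g i (x i)) := by
        intro x hx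
        rw [Fintype.mem_piFinset] at hx
        congr 2
        funext i
        exact (Finset.mem_filter.1 (hx i)).2
      rw [Finset.sum_congr rfl this, ← Finset.mul_sum]
      congr 1
      exact (Finset.prod_univ_sum
        (fun i => Finset.univ.filter (fun y => signBit ψ y = z i))
        (fun i y => |ψ y| * g i y)).symm
    rw [core]
    -- now expand μ into constant + sign parts
    set α : Fin M → ℝ := fun i => (μ i false + μ i true) / 2 with hα
    set β : Fin M → ℝ := fun i => (μ i false - μ i true) / 2 with hβ2
    have hμ' : ∀ i (b : Bool), μ i b = β i * pm b + α i := by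
      intro i b
      cases b <;> simp [pm, hα, hβ2] <;> ring
    have expand : ∀ z : Fin M → Bool, ∏ i, μ i (z i)
        = ∑ S ∈ (Finset.univ : Finset (Fin M)).powerset,
            (∏ i ∈ S, (β i * pm (z i))) * ∏ i ∈ Finset.univ \ S, α i := by
      intro z
      simp_rw [hμ' _ (z _)]
      exact Finset.prod_add _ _ _
    simp_rw [expand, Finset.mul_sum]
    rw [Finset.sum_comm]
    have zero_term : ∀ S ∈ (Finset.univ : Finset (Fin M)).powerset,
        ∑ z : Fin M → Bool,
          Ψ z * ((∏ i ∈ S, (β i * pm (z i))) * ∏ i ∈ Finset.univ \ S, α i) = 0 := by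
      intro S _
      by_cases hc : S.card < D
      · have hchar : ∑ z : Fin M → Bool, Ψ z * ∏ i ∈ S, pm (z i) = 0 := by
          have := char_sum_zero Ψ hΨ (fun i => if i ∈ S then 1 else 0) ?_
          · convert this using 2 with z
            congr 1
            calc ∏ i ∈ S, pm (z i)
                = ∏ i ∈ Finset.univ ∩ S, pm (z i) := by rw [Finset.univ_inter]
              _ = ∏ i, (if i ∈ S then pm (z i) else 1) :=
                  (Finset.prod_ite_mem Finset.univ S fun i => pm (z i)).symm
              _ = ∏ i, pm (z i) ^ (if i ∈ S then 1 else 0) := by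
                  apply Finset.prod_congr rfl
                  intro i _
                  by_cases hi : i ∈ S <;> simp [hi]
          · simpa using hc
        calc ∑ z : Fin M → Bool,
              Ψ z * ((∏ i ∈ S, (β i * pm (z i))) * ∏ i ∈ Finset.univ \ S, α i)
            = ((∏ i ∈ S, β i) * ∏ i ∈ Finset.univ \ S, α i)
              * ∑ z : Fin M → Bool, Ψ z * ∏ i ∈ S, pm (z i) := by
              rw [Finset.mul_sum]
              apply Finset.sum_congr rfl
              intro z _
              rw [Finset.prod_mul_distrib]
              ring
          _ = 0 := by rw [hchar, mul_zero]
      · push_neg at hc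
        obtain ⟨i, hiS, hid⟩ : ∃ i ∈ S, degi i < d := by
          by_contra hcon
          push_neg at hcon
          have h1 : D * d ≤ ∑ i ∈ S, degi i := by
            calc D * d ≤ S.card * d := Nat.mul_le_mul_right d hc
              _ ≤ ∑ i ∈ S, degi i := by
                  rw [← Finset.sum_const_nat (fun x hx => rfl)]
                  exact Finset.sum_le_sum hcon
          have h2 : ∑ i ∈ S, degi i ≤ ∑ i, degi i :=
            Finset.sum_le_sum_of_subset (Finset.subset_univ S)
          omega
        have hb0 : β i = 0 := by
          show (μ i false - μ i true) / 2 = 0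
          rw [hβ i hid]; ring
        apply Finset.sum_eq_zero
        intro z _
        rw [Finset.prod_eq_zero hiS (by rw [hb0]; ring)]
        ring
    apply Finset.sum_eq_zero
    intro S hS
    rw [← Finset.mul_sum, zero_term S hS, mul_zero]
  -- reduce to monomials
  rw [Finset.sum_congr rfl (fun x _ => by
    rw [MvPolynomial.eval_eq' (fun ij => pm (x ij.1 ij.2)) q, Finset.mul_sum])]
  rw [Finset.sum_comm]
  apply Finset.sum_eq_zero
  intro s hsupp
  have hdeg : (∑ ij : Fin M × Fin m, s ij) < D * d := by
    have h1 : (s.sum fun _ e => e) ≤ q.totalDegree := MvPolynomial.le_totalDegree hsupp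
    have h2 : (s.sum fun _ e => e) = ∑ ij : Fin M × Fin m, s ij := by
      rw [Finsupp.sum_fintype]; intro; rfl
    omega
  have := key s hdeg
  calc ∑ x : Fin M → (Fin m → Bool),
        dualBlock Ψ ψ x * (q.coeff s * ∏ ij : Fin M × Fin m, pm (x ij.1 ij.2) ^ s ij)
      = q.coeff s * ∑ x : Fin M → (Fin m → Bool),
        dualBlock Ψ ψ x * ∏ ij : Fin M × Fin m, pm (x ij.1 ij.2) ^ s ij := by
        rw [Finset.mul_sum]; apply Finset.sum_congr rfl; intro x _; ring
    _ = 0 := by rw [this, mul_zero]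
end

section
/- Let p : {-1,1}^n → ℝ be a polynomial. Then there is a univariate polynomial q : ℝ → ℝ of degree at most deg(p) such that for every t ∈ {0,1,...,n}, q(t) = C(n,t)^{-1} · ∑_{x : |x|=t} p(x), where |x| denotes the number of coordinates of x equal to -1. -/
/-- The Hamming weight of `x ∈ {-1,1}^n`: the number of coordinates equal to `-1`
(i.e. the number of `true` coordinates in the Boolean encoding). -/
def hammingWeight {n : ℕ} (x : Fin n → Bool) : ℕ :=
  (Finset.univ.filter fun i => x i = true).card

open Finset Polynomial

/-! Since `x_i ^ 2 = 1` on the cube, each monomial of `p` agrees there with a multilinear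
monomial `∏_{i ∈ S} x_i` with `|S| ≤ deg p`. Writing `x_i = 1 - 2·[x_i = -1]` expands it as
`∑_{A ⊆ S} (-2)^|A| · [x_i = -1 for all i ∈ A]`. Exactly `C(n - |A|, t - |A|)` points of the
weight-`t` layer have `x_i = -1` on `A`, so the layer average of this indicator is
`t (t - 1) ⋯ (t - |A| + 1) / (n (n - 1) ⋯ (n - |A| + 1))`, a polynomial of degree `|A|` in `t`.
Layer averages are linear, so the functions whose layer averages are interpolated by a polynomial
of degree `≤ d` form a submodule, and it contains `p` for `d = deg p`. -/

def hammingLayer (n t : ℕ) : Finset (Fin n → Bool) := univ.filter fun x => hammingWeight x = t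

def trueSetEquiv (α : Type*) [Fintype α] [DecidableEq α] : (α → Bool) ≃ Finset α where
  toFun x := {i | x i = true}
  invFun T i := decide (i ∈ T)
  left_inv x := by ext i; simp
  right_inv T := by ext i; simp

lemma card_filter_hammingLayer_forall_eq_true (n t : ℕ) (A : Finset (Fin n)) :
    #{x ∈ hammingLayer n t | ∀ i ∈ A, x i = true} = #{T ∈ powersetCard t univ | A ⊆ T} :=
  card_equiv (trueSetEquiv (Fin n)) fun x => by
    simp only [hammingLayer, mem_filter, mem_univ, true_and, mem_powersetCard, subset_univ]
    simp [hammingWeight, trueSetEquiv, subset_iff]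

lemma choose_sub_mul_descFactorial {n t a : ℕ} (hat : a ≤ t) :
    (n - a).choose (t - a) * n.descFactorial a = n.choose t * t.descFactorial a := by
  simp only [Nat.descFactorial_eq_factorial_mul_choose]
  calc (n - a).choose (t - a) * (a.factorial * n.choose a)
      = a.factorial * (n.choose t * t.choose a) := by rw [Nat.choose_mul hat]; ring
    _ = n.choose t * (a.factorial * t.choose a) := by ring

lemma card_filter_hammingLayer_forall_eq_true_mul_descFactorial (n t : ℕ)
    (A : Finset (Fin n)) :
    #{x ∈ hammingLayer n t | ∀ i ∈ A, x i = true} * n.descFactorial #A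
      = n.choose t * t.descFactorial #A := by
  rw [card_filter_hammingLayer_forall_eq_true]
  rcases le_or_gt #A t with hAt | htA
  · rw [card_filter_powersetCard_subset A univ t (subset_univ A) hAt, card_univ,
      Fintype.card_fin, choose_sub_mul_descFactorial hAt]
  · have hempty : {T ∈ powersetCard t (univ : Finset (Fin n)) | A ⊆ T} = ∅ :=
      filter_eq_empty_iff.2 fun T hT hAT =>
        (card_le_card hAT).not_gt ((mem_powersetCard.1 hT).2 ▸ htA)
    rw [hempty, Nat.descFactorial_eq_zero_iff_lt.2 htA]
    simp

def symmetrizable (n d : ℕ) : Submodule ℝ ((Fin n → Bool) → ℝ) where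
  carrier := {f | ∃ q : ℝ[X], q.natDegree ≤ d ∧
    ∀ t ≤ n, q.eval (t : ℝ) = (n.choose t : ℝ)⁻¹ * ∑ x ∈ hammingLayer n t, f x}
  zero_mem' := ⟨0, by simp⟩
  add_mem' := by
    rintro f g ⟨q, hq, hfq⟩ ⟨r, hr, hgr⟩
    exact ⟨q + r, natDegree_add_le_of_degree_le hq hr, fun t ht => by
      simp [hfq t ht, hgr t ht, sum_add_distrib, mul_add]⟩
  smul_mem' := by
    rintro c f ⟨q, hq, hfq⟩
    exact ⟨C c * q, (natDegree_C_mul_le c q).trans hq, fun t ht => by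
      simp [hfq t ht, mul_sum, mul_left_comm]⟩

lemma symmetrizable_mono {n d e : ℕ} (hde : d ≤ e) : symmetrizable n d ≤ symmetrizable n e :=
  fun _ ⟨q, hq, hfq⟩ => ⟨q, hq.trans hde, hfq⟩

lemma prod_indicator_mem_symmetrizable {n : ℕ} (A : Finset (Fin n)) :
    (fun x : Fin n → Bool => ∏ i ∈ A, if x i then (1 : ℝ) else 0) ∈ symmetrizable n #A := by
  refine ⟨C (n.descFactorial #A : ℝ)⁻¹ * descPochhammer ℝ #A,
    (natDegree_C_mul_le _ _).trans (descPochhammer_natDegree ℝ #A).le, fun t ht => ?_⟩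
  have hcount := card_filter_hammingLayer_forall_eq_true_mul_descFactorial n t A
  have hchoose : (n.choose t : ℝ) ≠ 0 := by exact_mod_cast (Nat.choose_pos ht).ne'
  have hdesc : (n.descFactorial #A : ℝ) ≠ 0 := by
    have hAn : #A ≤ n := card_le_univ A |>.trans_eq (Fintype.card_fin n)
    exact_mod_cast (Nat.descFactorial_pos.2 hAn).ne'
  have hsum : ∑ x ∈ hammingLayer n t, (∏ i ∈ A, if x i then (1 : ℝ) else 0)
      = #{x ∈ hammingLayer n t | ∀ i ∈ A, x i = true} := by
    rw [natCast_card_filter]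
    simp only [prod_boole]
    congr! -- the two sides differ only in their `Decidable` instances
  rw [hsum, eval_mul, eval_C, descPochhammer_eval_eq_descFactorial]
  field_simp
  norm_cast
  linarith

lemma pm_eq_one_add (b : Bool) : pm b = 1 + -2 * if b then 1 else 0 := by
  cases b <;> norm_num [pm]

lemma prod_pm_mem_symmetrizable {n : ℕ} (S : Finset (Fin n)) :
    (fun x : Fin n → Bool => ∏ i ∈ S, pm (x i)) ∈ symmetrizable n #S := by
  have hexpand : (fun x : Fin n → Bool => ∏ i ∈ S, pm (x i))
      = ∑ A ∈ S.powerset,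
          (-2 : ℝ) ^ #A • fun x : Fin n → Bool => ∏ i ∈ A, if x i then (1 : ℝ) else 0 := by
    ext x
    simp only [pm_eq_one_add, prod_one_add, prod_mul_distrib, prod_const, Finset.sum_apply,
      Pi.smul_apply, smul_eq_mul]
  rw [hexpand]
  exact Submodule.sum_mem _ fun A hA => Submodule.smul_mem _ _
    (symmetrizable_mono (card_le_card (mem_powerset.1 hA)) (prod_indicator_mem_symmetrizable A))

lemma pm_pow (b : Bool) (e : ℕ) : pm b ^ e = if Odd e then pm b else 1 := by
  split_ifs with he
  · cases b <;> simp [pm, he.neg_one_pow]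
  · cases b <;> simp [pm, (Nat.not_odd_iff_even.1 he).neg_one_pow]

lemma card_filter_odd_le_sum {ι : Type*} (s : Finset ι) (f : ι → ℕ) :
    #{i ∈ s | Odd (f i)} ≤ ∑ i ∈ s, f i := by
  rw [card_filter]
  exact sum_le_sum fun i _ => by split_ifs with h; exacts [h.pos, Nat.zero_le _]

lemma prod_pm_pow_mem_symmetrizable {n : ℕ} (m : Fin n →₀ ℕ) :
    (fun x : Fin n → Bool => ∏ i, pm (x i) ^ m i) ∈ symmetrizable n (m.sum fun _ e => e) := by
  have hodd : (fun x : Fin n → Bool => ∏ i, pm (x i) ^ m i)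
      = fun x => ∏ i ∈ {i | Odd (m i)}, pm (x i) := by
    ext x
    rw [prod_filter]
    simp only [pm_pow]
  rw [hodd, Finsupp.sum_fintype _ _ fun _ => rfl]
  exact symmetrizable_mono (card_filter_odd_le_sum _ _) (prod_pm_mem_symmetrizable _)

/-- Minsky–Papert symmetrization: for any polynomial `p` on `{-1,1}^n` there is a
univariate polynomial `q` of degree at most `deg p` whose value at each
`t ∈ {0,…,n}` is the average of `p` over the Hamming-weight-`t` layer. -/
theorem minsky_papert_symmetrization (n : ℕ) (p : MvPolynomial (Fin n) ℝ) :
    ∃ q : Polynomial ℝ, q.natDegree ≤ p.totalDegree ∧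
      ∀ t : ℕ, t ≤ n →
        q.eval (t : ℝ) = ((n.choose t : ℝ))⁻¹ *
          ∑ x ∈ Finset.univ.filter (fun x : Fin n → Bool => hammingWeight x = t),
            MvPolynomial.eval (fun i => pm (x i)) p := by
  have hexpand : (fun x : Fin n → Bool => MvPolynomial.eval (fun i => pm (x i)) p)
      = ∑ m ∈ p.support, p.coeff m • fun x => ∏ i, pm (x i) ^ m i := by
    ext x
    simp only [MvPolynomial.eval_eq', Finset.sum_apply, Pi.smul_apply, smul_eq_mul]
  have hmem : (fun x : Fin n → Bool => MvPolynomial.eval (fun i => pm (x i)) p)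
      ∈ symmetrizable n p.totalDegree := by
    rw [hexpand]
    exact Submodule.sum_mem _ fun m hm => Submodule.smul_mem _ _
      (symmetrizable_mono (MvPolynomial.le_totalDegree hm) (prod_pm_pow_mem_symmetrizable m))
  exact hmem
end

section
/- Let k, R, N ∈ ℕ, let η_i : {0,...,k} → ℝ≥0 for i = 1,...,R, let t = (t₁,...,t_R) ∈ {0,...,k}^R with t₁ + ... + t_R > N, and set C = ∑_{s=1}^∞ 1/(s·log²(2s)) (which is finite), M = ⌊N/(2k)⌋. Then there exists s with M ≤ s ≤ R such that t_i ≥ N/(2Cs·log²(2s)) for at least s indices i ∈ {1,...,R}. -/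
open Real

lemma aux_one_le_logb {x : ℝ} (hx : 2 ≤ x) : 1 ≤ Real.logb 2 x := by
  have := Real.logb_self_eq_one (b := 2) one_lt_two
  calc (1:ℝ) = Real.logb 2 2 := this.symm
    _ ≤ Real.logb 2 x := Real.logb_le_logb_of_le one_lt_two two_pos hx

lemma aux_summable : Summable (fun s : ℕ =>
    1 / (((s : ℝ) + 1) * (Real.logb 2 (2 * ((s : ℝ) + 1))) ^ 2)) := by
  set a : ℕ → ℝ := fun s => 1 / (((s : ℝ) + 1) * (Real.logb 2 (2 * ((s : ℝ) + 1))) ^ 2) with ha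
  have hL : ∀ s : ℕ, 1 ≤ Real.logb 2 (2 * ((s : ℝ) + 1)) := by
    intro s
    apply aux_one_le_logb
    nlinarith [Nat.cast_nonneg (α := ℝ) s]
  have hden_pos : ∀ s : ℕ, 0 < ((s : ℝ) + 1) * (Real.logb 2 (2 * ((s : ℝ) + 1))) ^ 2 := by
    intro s
    have := hL s
    positivity
  have h_nonneg : ∀ s, 0 ≤ a s := fun s => le_of_lt (by simpa [ha] using one_div_pos.mpr (hden_pos s))
  have h_mono : ∀ ⦃m n : ℕ⦄, 0 < m → m ≤ n → a n ≤ a m := by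
    intro m n _ hmn
    apply one_div_le_one_div_of_le (hden_pos m)
    have hc : (m : ℝ) ≤ n := Nat.cast_le.mpr hmn
    have hlog : Real.logb 2 (2 * ((m : ℝ) + 1)) ≤ Real.logb 2 (2 * ((n : ℝ) + 1)) :=
      Real.logb_le_logb_of_le one_lt_two (by linarith [Nat.cast_nonneg (α := ℝ) m]) (by linarith)
    have h1 := hL m
    have hsq : (Real.logb 2 (2 * ((m : ℝ) + 1))) ^ 2 ≤ (Real.logb 2 (2 * ((n : ℝ) + 1))) ^ 2 :=
      pow_le_pow_left₀ (by linarith) hlog 2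
    have := mul_le_mul (show (m:ℝ) + 1 ≤ (n:ℝ) + 1 by linarith) hsq (by nlinarith) (by linarith)
    linarith
  rw [← summable_condensed_iff_of_nonneg h_nonneg h_mono]
  have hcmp : ∀ k : ℕ, (2:ℝ) ^ k * a (2 ^ k) ≤ 1 / ((k : ℝ) + 1) ^ 2 := by
    intro k
    have h2k : ((2 ^ k : ℕ) : ℝ) = (2:ℝ) ^ k := by push_cast; ring
    have hpow : (0:ℝ) < 2 ^ k := by positivity
    have hlog : (k : ℝ) + 1 ≤ Real.logb 2 (2 * (((2 ^ k : ℕ) : ℝ) + 1)) := by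
      have h1 : ((2:ℝ)) ^ (k + 1) ≤ 2 * (((2 ^ k : ℕ) : ℝ) + 1) := by
        rw [h2k]; ring_nf; nlinarith
      calc ((k:ℝ) + 1) = Real.logb 2 ((2:ℝ) ^ (k+1)) := by
            rw [Real.logb_pow, Real.logb_self_eq_one one_lt_two]; push_cast; ring
        _ ≤ _ := Real.logb_le_logb_of_le one_lt_two (by positivity) h1
    have hLpos : (0:ℝ) < (k : ℝ) + 1 := by positivity
    have hden : ((k : ℝ) + 1) ^ 2 * (2:ℝ) ^ k ≤
        (((2 ^ k : ℕ) : ℝ) + 1) * (Real.logb 2 (2 * (((2 ^ k : ℕ) : ℝ) + 1))) ^ 2 := by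
      have h2 : (2:ℝ) ^ k ≤ ((2 ^ k : ℕ) : ℝ) + 1 := by rw [h2k]; linarith
      have hsq : ((k:ℝ)+1)^2 ≤ (Real.logb 2 (2 * (((2 ^ k : ℕ) : ℝ) + 1)))^2 :=
        pow_le_pow_left₀ (by positivity) hlog 2
      calc ((k : ℝ) + 1) ^ 2 * (2:ℝ) ^ k
          ≤ (Real.logb 2 (2 * (((2 ^ k : ℕ) : ℝ) + 1)))^2 * (((2 ^ k : ℕ) : ℝ) + 1) :=
            mul_le_mul hsq h2 (by positivity) (by positivity)
        _ = _ := mul_comm _ _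
    have := hden_pos (2 ^ k)
    rw [ha]
    simp only
    rw [mul_one_div, div_le_div_iff₀ this (by positivity)]
    nlinarith
  apply Summable.of_nonneg_of_le (fun k => by positivity) hcmp
  have : Summable (fun k : ℕ => 1 / ((k : ℝ) + 1) ^ 2) := by
    have h := (summable_nat_add_iff 1).mpr (Real.summable_one_div_nat_pow.mpr one_lt_two)
    convert h using 2 with k
    rfl
    push_cast
    ring
  exact this

/-- Structural pigeonhole observation: if `t₁,…,t_R ∈ {0,…,k}` have sum exceeding
`N`, and `C = ∑_{s=1}^∞ 1/(s·log₂²(2s))`, `M = ⌊N/(2k)⌋`, then there is an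
`s ∈ {M,…,R}` such that `t_i ≥ N/(2Cs·log₂²(2s))` for at least `s` indices `i`. -/
theorem pigeonhole_large_entries (k R N : ℕ) (t : Fin R → ℕ)
    (ht : ∀ i, t i ≤ k) (hsum : N < ∑ i, t i)
    (C : ℝ)
    (hC : C = ∑' s : ℕ, 1 / (((s : ℝ) + 1) * (Real.logb 2 (2 * ((s : ℝ) + 1))) ^ 2)) :
    ∃ s : ℕ, N / (2 * k) ≤ s ∧ s ≤ R ∧
      s ≤ (Finset.univ.filter fun i =>
            (N : ℝ) / (2 * C * (s : ℝ) * (Real.logb 2 (2 * (s : ℝ))) ^ 2) ≤ (t i : ℝ)).card := by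
  -- degenerate case k = 0
  rcases Nat.eq_zero_or_pos k with hk0 | hk0
  · exfalso
    have : ∑ i, t i = 0 := Finset.sum_eq_zero fun i _ => Nat.le_zero.mp (hk0 ▸ ht i)
    omega
  set a : ℕ → ℝ := fun s => 1 / (((s : ℝ) + 1) * (Real.logb 2 (2 * ((s : ℝ) + 1))) ^ 2) with ha
  have hsummable : Summable a := aux_summable
  have hL : ∀ s : ℕ, 1 ≤ Real.logb 2 (2 * ((s : ℝ) + 1)) := by
    intro s
    apply aux_one_le_logb
    nlinarith [Nat.cast_nonneg (α := ℝ) s]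
  have hden_pos : ∀ s : ℕ, 0 < ((s : ℝ) + 1) * (Real.logb 2 (2 * ((s : ℝ) + 1))) ^ 2 := by
    intro s
    have := hL s
    positivity
  have ha_nonneg : ∀ s, 0 ≤ a s := fun s => le_of_lt (by simpa [ha] using one_div_pos.mpr (hden_pos s))
  have hCone : (1 : ℝ) ≤ C := by
    have h0 : a 0 ≤ C := hC ▸ Summable.le_tsum hsummable 0 (fun s _ => ha_nonneg s)
    have : a 0 = 1 := by
      simp [ha, Real.logb_self_eq_one (b := 2) one_lt_two]
    linarith
  have hCpos : (0:ℝ) < C := by linarith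
  by_contra hcon
  push_neg at hcon
  set M := N / (2 * k) with hM
  -- sorted (decreasing) version of t
  set σ := Tuple.sort t with hσ
  set g : Fin R → ℕ := fun j => t (σ j.rev) with hg
  have hganti : ∀ ⦃j j' : Fin R⦄, j ≤ j' → g j' ≤ g j := by
    intro j j' hjj
    exact Tuple.monotone_sort t (Fin.rev_le_rev.mpr hjj)
  have hsum_eq : ∑ j, g j = ∑ i, t i := Equiv.sum_comp (Fin.revPerm.trans σ) t
  -- key pointwise bound for large indices
  have key : ∀ j : Fin R, M ≤ (j : ℕ) → (g j : ℝ) ≤ (N : ℝ) / (2 * C) * a j := by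
    intro j hj
    by_contra hlt
    push_neg at hlt
    have hθ : (N : ℝ) / (2 * C * ((((j : ℕ) + 1 : ℕ)) : ℝ)
        * (Real.logb 2 (2 * ((((j : ℕ) + 1 : ℕ)) : ℝ))) ^ 2) = (N : ℝ) / (2 * C) * a (j : ℕ) := by
      simp only [ha]
      rw [div_mul_div_comm, mul_one]
      push_cast
      congr 1
      ring
    have hcard := hcon ((j : ℕ) + 1) (le_trans hj (Nat.le_succ _)) j.isLt
    -- build j+1 elements in the filter
    have hsub : (Finset.Iic j).image (fun j' => σ j'.rev) ⊆
        Finset.univ.filter fun i =>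
          (N : ℝ) / (2 * C * ((((j : ℕ) + 1 : ℕ)) : ℝ)
            * (Real.logb 2 (2 * ((((j : ℕ) + 1 : ℕ)) : ℝ))) ^ 2) ≤ (t i : ℝ) := by
      intro i hi
      simp only [Finset.mem_image, Finset.mem_Iic] at hi
      obtain ⟨j', hj', rfl⟩ := hi
      simp only [Finset.mem_filter, Finset.mem_univ, true_and]
      rw [hθ]
      have h1 : g j ≤ g j' := hganti hj'
      have : (g j : ℝ) ≤ (g j' : ℝ) := Nat.cast_le.mpr h1
      calc (N : ℝ) / (2 * C) * a (j : ℕ) ≤ (g j : ℝ) := le_of_lt hlt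
        _ ≤ (g j' : ℝ) := this
        _ = (t (σ j'.rev) : ℝ) := rfl
    have hinj : Function.Injective (fun j' : Fin R => σ j'.rev) :=
      σ.injective.comp (fun x y h => Fin.rev_injective h)
    have hcard2 : (j : ℕ) + 1 ≤ (Finset.univ.filter fun i =>
          (N : ℝ) / (2 * C * ((((j : ℕ) + 1 : ℕ)) : ℝ)
            * (Real.logb 2 (2 * ((((j : ℕ) + 1 : ℕ)) : ℝ))) ^ 2) ≤ (t i : ℝ)).card := by
      calc (j : ℕ) + 1 = (Finset.Iic j).card := (Fin.card_Iic j).symm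
        _ = ((Finset.Iic j).image (fun j' => σ j'.rev)).card :=
            (Finset.card_image_of_injective _ hinj).symm
        _ ≤ _ := Finset.card_le_card hsub
    omega
  -- now bound the total sum
  have hfinal : ((∑ i, t i : ℕ) : ℝ) ≤ (N : ℝ) := by
    rw [← hsum_eq]
    push_cast
    rw [← Finset.sum_filter_add_sum_filter_not Finset.univ (fun j : Fin R => (j : ℕ) < M)
      (fun j => (g j : ℝ))]
    have hb1 : ∑ j ∈ Finset.univ.filter (fun j : Fin R => (j : ℕ) < M), (g j : ℝ)
        ≤ (M : ℝ) * (k : ℝ) := by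
      have hcardle : (Finset.univ.filter (fun j : Fin R => (j : ℕ) < M)).card ≤ M := by
        have : (Finset.univ.filter (fun j : Fin R => (j : ℕ) < M)).card
            = ((Finset.univ.filter (fun j : Fin R => (j : ℕ) < M)).image
              (fun j : Fin R => (j : ℕ))).card :=
          (Finset.card_image_of_injective _ Fin.val_injective).symm
        rw [this]
        calc _ ≤ (Finset.range M).card := by
              apply Finset.card_le_card
              intro m hm
              simp only [Finset.mem_image, Finset.mem_filter, Finset.mem_univ, true_and] at hm
              obtain ⟨j, hj, rfl⟩ := hm
              exact Finset.mem_range.mpr hj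
          _ = M := Finset.card_range M
      calc ∑ j ∈ Finset.univ.filter (fun j : Fin R => (j : ℕ) < M), (g j : ℝ)
          ≤ ∑ _j ∈ Finset.univ.filter (fun j : Fin R => (j : ℕ) < M), (k : ℝ) :=
            Finset.sum_le_sum (fun j _ => Nat.cast_le.mpr (ht _))
        _ = (Finset.univ.filter (fun j : Fin R => (j : ℕ) < M)).card * (k : ℝ) := by
            rw [Finset.sum_const, nsmul_eq_mul]
        _ ≤ (M : ℝ) * (k : ℝ) := by
            have := hcardle
            have hk' : (0:ℝ) ≤ (k : ℝ) := Nat.cast_nonneg k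
            exact mul_le_mul_of_nonneg_right (Nat.cast_le.mpr this) hk'
    have hb2 : ∑ j ∈ Finset.univ.filter (fun j : Fin R => ¬ (j : ℕ) < M), (g j : ℝ)
        ≤ (N : ℝ) / 2 := by
      calc ∑ j ∈ Finset.univ.filter (fun j : Fin R => ¬ (j : ℕ) < M), (g j : ℝ)
          ≤ ∑ j ∈ Finset.univ.filter (fun j : Fin R => ¬ (j : ℕ) < M),
              (N : ℝ) / (2 * C) * a (j : ℕ) :=
            Finset.sum_le_sum (fun j hj => key j (not_lt.mp (Finset.mem_filter.mp hj).2))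
        _ = (N : ℝ) / (2 * C) *
            ∑ j ∈ Finset.univ.filter (fun j : Fin R => ¬ (j : ℕ) < M), a (j : ℕ) := by
            rw [Finset.mul_sum]
        _ ≤ (N : ℝ) / (2 * C) * C := by
            apply mul_le_mul_of_nonneg_left _ (by positivity)
            have himg : ∑ j ∈ Finset.univ.filter (fun j : Fin R => ¬ (j : ℕ) < M), a (j : ℕ)
                = ∑ m ∈ (Finset.univ.filter (fun j : Fin R => ¬ (j : ℕ) < M)).image
                    (fun j : Fin R => (j : ℕ)), a m := by
              rw [Finset.sum_image (fun x _ y _ h => Fin.val_injective h)]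
            rw [himg, hC]
            exact Summable.sum_le_tsum _ (fun m _ => ha_nonneg m) hsummable
        _ = (N : ℝ) / 2 := by
            field_simp
    have hMk : (M : ℝ) * (k : ℝ) ≤ (N : ℝ) / 2 := by
      have h1 : M * (2 * k) ≤ N := Nat.div_mul_le_self N (2 * k)
      have h2 : (M : ℝ) * (2 * (k : ℝ)) ≤ (N : ℝ) := by exact_mod_cast h1
      linarith
    linarith
  have : (∑ i, t i) ≤ N := by exact_mod_cast hfinal
  omega
end
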